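/- Let (A,d) be a finite generalized metric space with more than one element that is not discrete (i.e., some two distinct points are at finite distance). Then A is not finitely presentable in the enriched sense in Met: the ω-chain of identity maps (A,d₁) → (A,d₂) → (A,d₃) → ⋯, where dₙ(x,y) = d(x,y) + 1/n for distinct x,y, has colimit (A,d), and the identity morphism of (A,d) does not factor through any colimit map id : (A,dₙ) → (A,d); hence A is not finitely presentable in the ordinary sense with respect to this particular chain, and Met(A,−) does not preserve filtered colimits. -/

import Mathlib

open CategoryTheory CategoryTheory.Limits ENNReal
open scoped Classical

/-- The category of generalized (extended-real-valued) metric spaces with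
nonexpanding (1-Lipschitz) maps. -/
structure MetCat : Type 1 where
  carrier : Type
  [str : EMetricSpace carrier]

attribute [instance] MetCat.str

instance : CoeSort MetCat Type := ⟨MetCat.carrier⟩

instance : Category MetCat where
  Hom X Y := {f : X.carrier → Y.carrier // LipschitzWith 1 f}
  id X := ⟨id, LipschitzWith.id⟩
  comp f g := ⟨g.1 ∘ f.1, (by simpa using g.2.comp f.2)⟩

/-- The category of generalized pseudometric spaces with nonexpanding maps. -/
structure PMetCat : Type 1 where
  carrier : Type
  [str : PseudoEMetricSpace carrier]

attribute [instance] PMetCat.str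

instance : CoeSort PMetCat Type := ⟨PMetCat.carrier⟩

instance : Category PMetCat where
  Hom X Y := {f : X.carrier → Y.carrier // LipschitzWith 1 f}
  id X := ⟨id, LipschitzWith.id⟩
  comp f g := ⟨g.1 ∘ f.1, (by simpa using g.2.comp f.2)⟩

/-- The full inclusion of metric spaces into pseudometric spaces. -/
def metToPMet : MetCat ⥤ PMetCat where
  obj X := ⟨X.carrier⟩
  map f := ⟨f.1, f.2⟩

/-- The sup-metric on the set of nonexpanding maps `X → Y`. -/
noncomputable instance MetCat.homEMetric (X Y : MetCat) : EMetricSpace (X ⟶ Y) where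
  edist f g := ⨆ x : X.carrier, edist (f.1 x) (g.1 x)
  edist_self f := by simp
  edist_comm f g := by simp [edist_comm]
  edist_triangle f g h :=
    iSup_le fun x => le_trans (edist_triangle _ (g.1 x) _)
      (add_le_add (le_iSup (fun x => edist (f.1 x) (g.1 x)) x)
        (le_iSup (fun x => edist (g.1 x) (h.1 x)) x))
  eq_of_edist_eq_zero := by
    intro f g h
    apply Subtype.ext
    funext x
    refine eq_of_edist_eq_zero (le_antisymm ?_ zero_le)
    calc edist (f.1 x) (g.1 x) ≤ ⨆ x : X.carrier, edist (f.1 x) (g.1 x) :=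
          le_iSup (fun x => edist (f.1 x) (g.1 x)) x
      _ = 0 := h

/-- The enriched hom-functor `Met(A, -) : Met ⥤ Met`, sending `Y` to the space of
nonexpanding maps `A → Y` with the sup-metric. -/
noncomputable def MetCat.enrichedHom (A : MetCat) : MetCat ⥤ MetCat where
  obj Y := ⟨A ⟶ Y⟩
  map f := ⟨fun g => g ≫ f, LipschitzWith.of_edist_le fun g h => by
    refine iSup_mono fun x => ?_
    have hf := f.2.edist_le_mul (g.1 x) (h.1 x)
    simp only [ENNReal.coe_one, one_mul] at hf
    exact hf⟩
  map_id Y := by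
    apply Subtype.ext
    funext g
    exact Category.comp_id g
  map_comp f k := by
    apply Subtype.ext
    funext g
    exact (Category.assoc g f k).symm

/-- The distance `d(x,y) + c` for distinct points, `0` on the diagonal. -/
noncomputable def shiftedDist {α : Type} [EMetricSpace α] (c : ℝ≥0∞) (x y : α) : ℝ≥0∞ :=
  if x = y then 0 else edist x y + c

lemma shiftedDist_self {α : Type} [EMetricSpace α] (c : ℝ≥0∞) (x : α) :
    shiftedDist c x x = 0 := if_pos rfl

lemma shiftedDist_comm {α : Type} [EMetricSpace α] (c : ℝ≥0∞) (x y : α) :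
    shiftedDist c x y = shiftedDist c y x := by
  unfold shiftedDist
  by_cases h : x = y
  · simp [h]
  · rw [if_neg h, if_neg (Ne.symm h), edist_comm]

lemma shiftedDist_triangle {α : Type} [EMetricSpace α] (c : ℝ≥0∞) (x y z : α) :
    shiftedDist c x z ≤ shiftedDist c x y + shiftedDist c y z := by
  unfold shiftedDist
  by_cases hxz : x = z
  · rw [if_pos hxz]; exact zero_le
  · rw [if_neg hxz]
    by_cases hxy : x = y
    · subst hxy
      rw [if_pos rfl, if_neg hxz, zero_add]
    · by_cases hyz : y = z
      · subst hyz
        rw [if_pos rfl, if_neg hxz, add_zero]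
      · rw [if_neg hxy, if_neg hyz]
        calc edist x z + c ≤ (edist x y + edist y z) + c :=
              add_le_add (edist_triangle x y z) le_rfl
          _ ≤ (edist x y + c) + (edist y z + c) := by
              rw [add_add_add_comm]
              exact add_le_add le_rfl le_self_add

lemma shiftedDist_eq_zero {α : Type} [EMetricSpace α] {c : ℝ≥0∞} (hc : c ≠ 0) {x y : α}
    (h : shiftedDist c x y = 0) : x = y := by
  by_contra hne
  rw [shiftedDist, if_neg hne] at h
  exact hc (add_eq_zero.mp h).2

lemma le_shiftedDist {α : Type} [EMetricSpace α] (c : ℝ≥0∞) (x y : α) :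
    edist x y ≤ shiftedDist c x y := by
  unfold shiftedDist
  by_cases hxy : x = y
  · simp [hxy]
  · rw [if_neg hxy]; exact le_self_add

lemma shiftedDist_mono {α : Type} [EMetricSpace α] {c c' : ℝ≥0∞} (h : c' ≤ c) (x y : α) :
    shiftedDist c' x y ≤ shiftedDist c x y := by
  unfold shiftedDist
  by_cases hxy : x = y
  · simp [hxy]
  · rw [if_neg hxy, if_neg hxy]
    exact add_le_add le_rfl h

/-- The metric `d(x,y) + c` (for distinct points) obtained by inflating a generalized
metric by a positive constant `c`. -/
noncomputable def shiftedEMetric (α : Type) [EMetricSpace α] (c : ℝ≥0∞) (hc : c ≠ 0) :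
    EMetricSpace α where
  edist := shiftedDist c
  edist_self := shiftedDist_self c
  edist_comm := shiftedDist_comm c
  edist_triangle := shiftedDist_triangle c
  eq_of_edist_eq_zero := fun h => shiftedDist_eq_zero hc h

/-- The `n`-th space `(A, dₙ)` of the chain, where `dₙ(x,y) = d(x,y) + 1/(n+1)`
for distinct `x`, `y`. -/
noncomputable def MetCat.chainObj (A : MetCat) (n : ℕ) : MetCat :=
  @MetCat.mk A.carrier (shiftedEMetric A.carrier ((n + 1 : ℝ≥0∞))⁻¹
      (ENNReal.inv_ne_zero.mpr (by simp)))

/-- The identity map `(A,dₙ) → (A,dₘ)` for `n ≤ m`, which is nonexpanding. -/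
noncomputable def MetCat.chainMap (A : MetCat) {n m : ℕ} (h : n ≤ m) :
    MetCat.chainObj A n ⟶ MetCat.chainObj A m := by
  refine ⟨id, LipschitzWith.of_edist_le fun x y => ?_⟩
  have hc : ((m + 1 : ℝ≥0∞))⁻¹ ≤ ((n + 1 : ℝ≥0∞))⁻¹ := by
    refine ENNReal.inv_le_inv.mpr (add_le_add ?_ le_rfl)
    exact_mod_cast Nat.cast_le.mpr h
  exact @shiftedDist_mono A.carrier A.str _ _ hc x y

/-- The `ω`-chain `(A,d₁) → (A,d₂) → ⋯` of identity maps. -/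
noncomputable def MetCat.chain (A : MetCat) : ℕ ⥤ MetCat where
  obj n := MetCat.chainObj A n
  map {n m} h := MetCat.chainMap A (leOfHom h)
  map_id n := Subtype.ext rfl
  map_comp f g := Subtype.ext rfl

/-- The cocone of identity maps `(A,dₙ) → (A,d)` over the chain. -/
noncomputable def MetCat.chainCocone (A : MetCat) : Cocone (MetCat.chain A) where
  pt := A
  ι :=
    { app := fun n => ⟨id, LipschitzWith.of_edist_le fun x y =>
        @le_shiftedDist A.carrier A.str ((n + 1 : ℝ≥0∞))⁻¹ x y⟩
      naturality := fun n m h => Subtype.ext rfl }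

/-!
Since `dₙ ≥ d ≥ dₙ - 1/(n+1)`, every cocone over the chain is a single nonexpanding map for `d`,
so `(A,d)` is the colimit; but a section of `id : (A,dₙ) → (A,d)` would force
`d(x,y) + 1/(n+1) ≤ d(x,y)`, impossible at a finite distance. If `Met(A,-)` preserved the
colimit, `Met(A,A)` would be the colimit of the `Met(A,(A,dₙ))`, and the maps factoring through
some stage would form a cocone whose induced map splits the inclusion, so `𝟙 A` would factor.
-/

lemma MetCat.Hom.edist_le {X Y : MetCat} (f : X ⟶ Y) (x y : X) :
    edist (f.1 x) (f.1 y) ≤ edist x y := by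
  simpa using f.2.edist_le_mul x y

lemma shiftedDist_le_add {α : Type} [EMetricSpace α] (c : ℝ≥0∞) (x y : α) :
    shiftedDist c x y ≤ edist x y + c := by
  unfold shiftedDist
  split_ifs <;> simp

lemma ENNReal.le_of_forall_le_add_inv_succ {a b : ℝ≥0∞}
    (h : ∀ n : ℕ, a ≤ b + ((n + 1 : ℝ≥0∞))⁻¹) : a ≤ b := by
  refine ENNReal.le_of_forall_pos_le_add fun ε hε _ => ?_
  obtain ⟨n, hn⟩ := ENNReal.exists_inv_nat_lt (by exact_mod_cast hε.ne' : (ε : ℝ≥0∞) ≠ 0)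
  exact (h n).trans (add_le_add le_rfl ((ENNReal.inv_le_inv.mpr (by simp)).trans hn.le))

namespace MetCat

variable (A : MetCat)

lemma cocone_ι_app_val_eq (s : Cocone A.chain) (n : ℕ) :
    (s.ι.app n).1 = (s.ι.app 0).1 :=
  congrArg Subtype.val (s.w (homOfLE (Nat.zero_le n)))

noncomputable def chainIsColimit : IsColimit A.chainCocone where
  desc s := ⟨(s.ι.app 0).1, LipschitzWith.of_edist_le fun x y => by
    refine ENNReal.le_of_forall_le_add_inv_succ fun n => ?_
    calc edist ((s.ι.app 0).1 x) ((s.ι.app 0).1 y)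
        = edist ((s.ι.app n).1 x) ((s.ι.app n).1 y) := by rw [cocone_ι_app_val_eq A s n]
      _ ≤ shiftedDist ((n + 1 : ℝ≥0∞))⁻¹ x y := Hom.edist_le (s.ι.app n) x y
      _ ≤ edist x y + ((n + 1 : ℝ≥0∞))⁻¹ := shiftedDist_le_add _ x y⟩
  fac s n := Subtype.ext (cocone_ι_app_val_eq A s n).symm
  uniq _ _ h := by
    apply Subtype.ext
    funext x
    exact congrFun (congrArg Subtype.val (h 0)) x

lemma edist_eq_top_of_comp_chainCocone_ι_eq_id {n : ℕ} {g : A ⟶ A.chain.obj n}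
    (hg : g ≫ A.chainCocone.ι.app n = 𝟙 A) {x y : A} (hxy : x ≠ y) : edist x y = ⊤ := by
  have hle : shiftedDist (α := A.carrier) ((n + 1 : ℝ≥0∞))⁻¹ x y ≤ edist x y := by
    have hgid : g.1 = id := congrArg Subtype.val hg
    have h := Hom.edist_le g x y
    rw [hgid] at h
    exact h
  rw [shiftedDist, if_neg hxy] at hle
  by_contra hfin
  have := ENNReal.le_of_add_le_add_left hfin (hle.trans_eq (add_zero _).symm)
  simp at this

variable {A}

lemma exists_comp_ι_eq_of_preservesColimit {J : Type} [SmallCategory J] {K : J ⥤ MetCat}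
    {c : Cocone K} (hc : IsColimit c) [PreservesColimit K A.enrichedHom] (f : A ⟶ c.pt) :
    ∃ (j : J) (g : A ⟶ K.obj j), g ≫ c.ι.app j = f := by
  have hHc : IsColimit (A.enrichedHom.mapCocone c) := isColimitOfPreserves A.enrichedHom hc
  let U : MetCat := ⟨{f : A ⟶ c.pt // ∃ (j : J) (g : A ⟶ K.obj j), g ≫ c.ι.app j = f}⟩
  let D : Cocone (K ⋙ A.enrichedHom) :=
    { pt := U
      ι :=
        { app := fun j => ⟨fun g => ⟨g ≫ c.ι.app j, j, g, rfl⟩,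
            (A.enrichedHom.map (c.ι.app j)).2.subtype_mk _⟩
          naturality := fun j j' u => Subtype.ext <| funext fun g =>
            Subtype.ext <| (Category.assoc _ _ _).trans (congrArg (g ≫ ·) (c.w u)) } }
  let incl : U ⟶ A.enrichedHom.obj c.pt := ⟨Subtype.val, LipschitzWith.subtype_val _⟩
  have hsplit : hHc.desc D ≫ incl = 𝟙 _ :=
    hHc.hom_ext fun j => by rw [← Category.assoc, hHc.fac D j]; rfl
  obtain ⟨j, g, hg⟩ := ((hHc.desc D).1 f).2
  exact ⟨j, g, hg.trans (congrFun (congrArg Subtype.val hsplit) f)⟩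

end MetCat

theorem finite_nondiscrete_not_finitely_presentable_general
    (A : MetCat)
    (hnd : ∃ x y : A.carrier, x ≠ y ∧ edist x y ≠ ⊤) :
    Nonempty (IsColimit (MetCat.chainCocone A)) ∧
    (¬ ∃ (n : ℕ) (g : A ⟶ (MetCat.chain A).obj n),
        g ≫ (MetCat.chainCocone A).ι.app n = 𝟙 A) ∧
    ¬ (∀ (J : Type) [SmallCategory J] [IsFiltered J],
        Nonempty (PreservesColimitsOfShape J (MetCat.enrichedHom A))) := by
  obtain ⟨x, y, hxy, hfin⟩ := hnd
  have not_split : ¬ ∃ (n : ℕ) (g : A ⟶ (MetCat.chain A).obj n),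
      g ≫ (MetCat.chainCocone A).ι.app n = 𝟙 A := fun ⟨_, _, hg⟩ =>
    hfin (A.edist_eq_top_of_comp_chainCocone_ι_eq_id hg hxy)
  refine ⟨⟨A.chainIsColimit⟩, not_split, fun H => ?_⟩
  obtain ⟨_⟩ := H ℕ
  exact not_split (MetCat.exists_comp_ι_eq_of_preservesColimit A.chainIsColimit (𝟙 A))

/-- A finite generalized metric space with more than one element which is
not discrete (some two distinct points are at finite distance) is not finitely presentable:
the chain `(A,d₁) → (A,d₂) → ⋯` of identities has colimit `(A,d)`, the identity of `(A,d)`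
does not factor through any colimit map `(A,dₙ) → (A,d)`, and the enriched hom-functor
`Met(A,-)` does not preserve filtered colimits. -/
theorem finite_nondiscrete_not_finitely_presentable
    (A : MetCat) [Finite A.carrier]
    (hnd : ∃ x y : A.carrier, x ≠ y ∧ edist x y ≠ ⊤) :
    Nonempty (IsColimit (MetCat.chainCocone A)) ∧
    (¬ ∃ (n : ℕ) (g : A ⟶ (MetCat.chain A).obj n),
        g ≫ (MetCat.chainCocone A).ι.app n = 𝟙 A) ∧
    ¬ (∀ (J : Type) [SmallCategory J] [IsFiltered J],
        Nonempty (PreservesColimitsOfShape J (MetCat.enrichedHom A))) :=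
  finite_nondiscrete_not_finitely_presentable_general A hnd
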